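/- arXiv:2410.20380 — 2 statements merged into one kernel-verified Lean document; each statement's English description precedes it below -/
import Mathlib

section
/- Let S, Y, X, Z be random variables with values in finite nonempty types on a common probability space such that S and Y are independent, Z = f(X) for a deterministic function f, and Z is sufficient for Y, i.e. I(Z;Y) = I(X;Y). Then the residual ε := I(Z;Y|S) − I(X;Y) is nonnegative: ε ≥ 0. -/
open MeasureTheory ProbabilityTheory
open scoped BigOperators

/-- Shannon entropy (in nats) of a random variable `X` with values in a finite type,
with respect to the measure `μ`. -/
noncomputable def finEntropy {Ω : Type*} [MeasurableSpace Ω] (μ : Measure Ω)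
    {α : Type*} [Fintype α] (X : Ω → α) : ℝ :=
  - ∑ a : α, (μ (X ⁻¹' {a})).toReal * Real.log (μ (X ⁻¹' {a})).toReal

/-- Conditional Shannon entropy `H(X|Z) = H(X,Z) - H(Z)`. -/
noncomputable def finCondEntropy {Ω : Type*} [MeasurableSpace Ω] (μ : Measure Ω)
    {α β : Type*} [Fintype α] [Fintype β] (X : Ω → α) (Z : Ω → β) : ℝ :=
  finEntropy μ (fun ω => (X ω, Z ω)) - finEntropy μ Z

/-- Shannon mutual information `I(X;Y) = H(X) + H(Y) - H(X,Y)`. -/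
noncomputable def finMutualInfo {Ω : Type*} [MeasurableSpace Ω] (μ : Measure Ω)
    {α β : Type*} [Fintype α] [Fintype β] (X : Ω → α) (Y : Ω → β) : ℝ :=
  finEntropy μ X + finEntropy μ Y - finEntropy μ (fun ω => (X ω, Y ω))

/-- Conditional Shannon mutual information
`I(X;Y|S) = H(X,S) + H(Y,S) - H(X,Y,S) - H(S)`. -/
noncomputable def finCondMutualInfo {Ω : Type*} [MeasurableSpace Ω] (μ : Measure Ω)
    {α β γ : Type*} [Fintype α] [Fintype β] [Fintype γ]
    (X : Ω → α) (Y : Ω → β) (S : Ω → γ) : ℝ :=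
  finEntropy μ (fun ω => (X ω, S ω)) + finEntropy μ (fun ω => (Y ω, S ω))
    - finEntropy μ (fun ω => (X ω, Y ω, S ω)) - finEntropy μ S

/-! By sufficiency the residual is `I(Z;Y|S) - I(Z;Y)`. Independence of `S` and `Y` splits
`H(Y,S) = H(Y) + H(S)`, and what remains is `H(Z,Y) + H(Z,S) - H(Z,Y,S) - H(Z) = I(Y;S|Z)`,
which is nonnegative by submodularity of entropy: Gibbs' inequality for the joint law of
`(Y,S)` given `Z = z` against the product of its marginals. -/

open Real

section Gibbs

lemma mul_log_div_le_sub {p r : ℝ} (hp : 0 ≤ p) (hr : 0 ≤ r) (hpr : 0 < p → 0 < r) :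
    p * log (r / p) ≤ r - p := by
  rcases hp.eq_or_lt with rfl | hp
  · simpa using hr
  calc p * log (r / p) ≤ p * (r / p - 1) :=
        mul_le_mul_of_nonneg_left (log_le_sub_one_of_pos (div_pos (hpr hp) hp)) hp.le
    _ = r - p := by field_simp

variable {α β : Type*} [Fintype α] [Fintype β]

/-- Submodularity of Shannon entropy, for an unnormalised distribution `q` on `α × β`. -/
lemma sum_negMulLog_add_negMulLog_sum_le (q : α → β → ℝ) (hq : ∀ a b, 0 ≤ q a b) :
    ∑ a, ∑ b, negMulLog (q a b) + negMulLog (∑ a, ∑ b, q a b)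
      ≤ ∑ a, negMulLog (∑ b, q a b) + ∑ b, negMulLog (∑ a, q a b) := by
  set row : α → ℝ := fun a => ∑ b, q a b
  set col : β → ℝ := fun b => ∑ a, q a b
  set total : ℝ := ∑ a, ∑ b, q a b
  have hq_le_row : ∀ a b, q a b ≤ row a := fun a b =>
    Finset.single_le_sum (fun b _ => hq a b) (Finset.mem_univ b)
  have hq_le_col : ∀ a b, q a b ≤ col b := fun a b =>
    Finset.single_le_sum (fun a _ => hq a b) (Finset.mem_univ a)
  have hrow_le_total : ∀ a, row a ≤ total := fun a =>
    Finset.single_le_sum (fun a _ => Finset.sum_nonneg fun b _ => hq a b) (Finset.mem_univ a)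
  -- Gibbs' inequality for `q` against the product `row a * col b / total` of its marginals.
  have hentry : ∀ a b, q a b * log (row a) + q a b * log (col b) - q a b * log total
      - q a b * log (q a b) ≤ row a * col b / total - q a b := by
    intro a b
    have hrow_nonneg := (hq a b).trans (hq_le_row a b)
    have hrcq : 0 ≤ row a * col b / total :=
      div_nonneg (mul_nonneg hrow_nonneg ((hq a b).trans (hq_le_col a b)))
        (hrow_nonneg.trans (hrow_le_total a))
    rcases (hq a b).eq_or_lt with h | h
    · simpa [← h] using hrcq
    have hrow := h.trans_le (hq_le_row a b)
    have hcol := h.trans_le (hq_le_col a b)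
    have htotal := hrow.trans_le (hrow_le_total a)
    convert mul_log_div_le_sub (hq a b) hrcq (fun _ => by positivity) using 1
    rw [log_div (by positivity) h.ne', log_div (by positivity) htotal.ne',
      log_mul hrow.ne' hcol.ne']
    ring
  have hsum_row : ∑ a, ∑ b, q a b * log (row a) = ∑ a, row a * log (row a) := by
    simp only [row, ← Finset.sum_mul]
  have hsum_col : ∑ a, ∑ b, q a b * log (col b) = ∑ b, col b * log (col b) := by
    rw [Finset.sum_comm]
    simp only [col, ← Finset.sum_mul]
  have hsum_total : ∑ a, ∑ b, q a b * log total = total * log total := by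
    simp only [total, ← Finset.sum_mul]
  have hsum_product : ∑ a, ∑ b, row a * col b / total = total := by
    have hcol_total : ∑ b, col b = total := Finset.sum_comm
    simp only [← Finset.sum_div, ← Finset.mul_sum, ← Finset.sum_mul, hcol_total]
    exact mul_self_div_self total
  have := Finset.sum_le_sum fun a (_ : a ∈ Finset.univ) =>
    Finset.sum_le_sum fun b (_ : b ∈ Finset.univ) => hentry a b
  simp only [Finset.sum_sub_distrib, Finset.sum_add_distrib, hsum_row, hsum_col, hsum_total,
    hsum_product] at this
  simp only [negMulLog, neg_mul, Finset.sum_neg_distrib]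
  linarith

end Gibbs

lemma preimage_pair_singleton {Ω α β : Type*} (X : Ω → α) (Y : Ω → β) (a : α) (b : β) :
    (fun ω => (X ω, Y ω)) ⁻¹' {(a, b)} = X ⁻¹' {a} ∩ Y ⁻¹' {b} := by
  rw [← Set.singleton_prod_singleton, Set.mk_preimage_prod]

section Entropy

variable {Ω : Type*} [MeasurableSpace Ω] (μ : Measure Ω)
  {α β γ : Type*} [Fintype α] [Fintype β] [Fintype γ]

lemma finEntropy_eq_sum_negMulLog (X : Ω → α) :
    finEntropy μ X = ∑ a, negMulLog (μ.real (X ⁻¹' {a})) := by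
  simp [finEntropy, negMulLog, measureReal_def]

variable [MeasurableSpace α] [MeasurableSingletonClass α] [MeasurableSpace β]
  [MeasurableSingletonClass β] [MeasurableSpace γ] [MeasurableSingletonClass γ]

lemma measureReal_eq_sum_inter_preimage [IsFiniteMeasure μ] {X : Ω → α} (hX : Measurable X)
    {s : Set Ω} (hs : MeasurableSet s) : μ.real s = ∑ a, μ.real (s ∩ X ⁻¹' {a}) := by
  rw [← measureReal_iUnion_fintype _ fun a => hs.inter (hX (measurableSet_singleton a))]
  · congr
    ext ω
    simp
  · exact fun a a' haa' => Disjoint.inter_right' s (Disjoint.inter_left' s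
      ((Set.disjoint_singleton.2 haa').preimage X))

lemma sum_measureReal_preimage_singleton_eq_one [IsProbabilityMeasure μ] {X : Ω → α}
    (hX : Measurable X) : ∑ a, μ.real (X ⁻¹' {a}) = 1 := by
  simpa using (measureReal_eq_sum_inter_preimage μ hX MeasurableSet.univ).symm

lemma finEntropy_pair_eq_add_of_indepFun [IsProbabilityMeasure μ] {X : Ω → α} {Y : Ω → β}
    (hX : Measurable X) (hY : Measurable Y) (hXY : IndepFun X Y μ) :
    finEntropy μ (fun ω => (X ω, Y ω)) = finEntropy μ X + finEntropy μ Y := by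
  have hmul : ∀ a b, μ.real ((fun ω => (X ω, Y ω)) ⁻¹' {(a, b)})
      = μ.real (X ⁻¹' {a}) * μ.real (Y ⁻¹' {b}) := fun a b => by
    rw [preimage_pair_singleton, measureReal_def,
      hXY.measure_inter_preimage_eq_mul _ _ (measurableSet_singleton a)
        (measurableSet_singleton b), ENNReal.toReal_mul, measureReal_def, measureReal_def]
  simp only [finEntropy_eq_sum_negMulLog μ, Fintype.sum_prod_type, hmul, negMulLog_mul,
    Finset.sum_add_distrib, ← Finset.sum_mul, ← Finset.mul_sum,
    sum_measureReal_preimage_singleton_eq_one μ hX, sum_measureReal_preimage_singleton_eq_one μ hY]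
  ring

lemma finEntropy_triple_add_finEntropy_le [IsFiniteMeasure μ] {X : Ω → α} {Y : Ω → β}
    {Z : Ω → γ} (hX : Measurable X) (hY : Measurable Y) (hZ : Measurable Z) :
    finEntropy μ (fun ω => (X ω, Y ω, Z ω)) + finEntropy μ X
      ≤ finEntropy μ (fun ω => (X ω, Y ω)) + finEntropy μ (fun ω => (X ω, Z ω)) := by
  set q : α → β → γ → ℝ := fun a b c => μ.real (X ⁻¹' {a} ∩ Y ⁻¹' {b} ∩ Z ⁻¹' {c})
  have hmarg_XY : ∀ a b, μ.real ((fun ω => (X ω, Y ω)) ⁻¹' {(a, b)}) = ∑ c, q a b c :=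
      fun a b => by
    rw [preimage_pair_singleton]
    exact measureReal_eq_sum_inter_preimage μ hZ
      ((hX (measurableSet_singleton a)).inter (hY (measurableSet_singleton b)))
  have hmarg_XZ : ∀ a c, μ.real ((fun ω => (X ω, Z ω)) ⁻¹' {(a, c)}) = ∑ b, q a b c :=
      fun a c => by
    rw [preimage_pair_singleton, measureReal_eq_sum_inter_preimage μ hY
      ((hX (measurableSet_singleton a)).inter (hZ (measurableSet_singleton c)))]
    simp only [q, Set.inter_right_comm]
  have hmarg_X : ∀ a, μ.real (X ⁻¹' {a}) = ∑ b, ∑ c, q a b c := fun a => by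
    rw [measureReal_eq_sum_inter_preimage μ hY (hX (measurableSet_singleton a))]
    exact Finset.sum_congr rfl fun b _ => by rw [← preimage_pair_singleton, hmarg_XY]
  have hatom : ∀ a b c, μ.real ((fun ω => (X ω, Y ω, Z ω)) ⁻¹' {(a, b, c)}) = q a b c :=
    fun a b c => by simp only [q, preimage_pair_singleton, Set.inter_assoc]
  simp only [finEntropy_eq_sum_negMulLog μ, Fintype.sum_prod_type, hmarg_XY, hmarg_XZ, hmarg_X,
    hatom]
  have := Finset.sum_le_sum fun a (_ : a ∈ Finset.univ) =>
    sum_negMulLog_add_negMulLog_sum_le (q a) fun _ _ => measureReal_nonneg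
  simpa only [Finset.sum_add_distrib] using this

end Entropy

theorem residual_nonneg_general {Ω : Type*} [MeasurableSpace Ω]
    (μ : Measure Ω) [IsProbabilityMeasure μ]
    {𝒮 𝒴 𝒳 𝒵 : Type*}
    [Fintype 𝒮] [MeasurableSpace 𝒮] [MeasurableSingletonClass 𝒮]
    [Fintype 𝒴] [MeasurableSpace 𝒴] [MeasurableSingletonClass 𝒴]
    [Fintype 𝒳]
    [Fintype 𝒵] [MeasurableSpace 𝒵] [MeasurableSingletonClass 𝒵]
    (S : Ω → 𝒮) (Y : Ω → 𝒴) (X : Ω → 𝒳) (Z : Ω → 𝒵)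
    (hS : Measurable S) (hY : Measurable Y) (hZ : Measurable Z)
    (hindep : IndepFun S Y μ)
    (hsuff : finMutualInfo μ Z Y = finMutualInfo μ X Y) :
    finCondMutualInfo μ Z Y S - finMutualInfo μ X Y ≥ 0 := by
  rw [← hsuff, finCondMutualInfo, finMutualInfo,
    finEntropy_pair_eq_add_of_indepFun μ hY hS hindep.symm]
  linarith [finEntropy_triple_add_finEntropy_le μ hZ hY hS]

theorem residual_nonneg {Ω : Type*} [MeasurableSpace Ω]
    (μ : Measure Ω) [IsProbabilityMeasure μ]
    {𝒮 𝒴 𝒳 𝒵 : Type*}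
    [Fintype 𝒮] [Nonempty 𝒮] [MeasurableSpace 𝒮] [MeasurableSingletonClass 𝒮]
    [Fintype 𝒴] [Nonempty 𝒴] [MeasurableSpace 𝒴] [MeasurableSingletonClass 𝒴]
    [Fintype 𝒳] [Nonempty 𝒳] [MeasurableSpace 𝒳] [MeasurableSingletonClass 𝒳]
    [Fintype 𝒵] [Nonempty 𝒵] [MeasurableSpace 𝒵] [MeasurableSingletonClass 𝒵]
    (S : Ω → 𝒮) (Y : Ω → 𝒴) (X : Ω → 𝒳) (Z : Ω → 𝒵)
    (hS : Measurable S) (hY : Measurable Y) (hX : Measurable X) (hZ : Measurable Z)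
    (hindep : IndepFun S Y μ)
    (f : 𝒳 → 𝒵) (hZf : Z = f ∘ X)
    (hsuff : finMutualInfo μ Z Y = finMutualInfo μ X Y) :
    finCondMutualInfo μ Z Y S - finMutualInfo μ X Y ≥ 0 :=
  residual_nonneg_general μ S Y X Z hS hY hZ hindep hsuff
end

section
/- Let S, Y, X, Z be random variables with values in finite nonempty types on a common probability space such that X = g(S,Y) for a deterministic function g and Z = f(X) for a deterministic function f, and define ε := I(Z;Y|S) − I(X;Y). If Z is invariant to the nuisance S, i.e. I(Z;S) = 0, then the representation is minimal up to the residual: I(Z;X) = I(X;Y) + ε. -/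
open MeasureTheory ProbabilityTheory
open scoped BigOperators

/-! Since `Z` is a function of `X`, `I(Z;X) = H(Z)`; since `Z` is also a function of `(Y, S)`,
`I(Z;Y|S) = H(Z|S)`, and invariance `I(Z;S) = 0` turns this into `H(Z)`. -/

section

variable {Ω : Type*} [MeasurableSpace Ω] (μ : Measure Ω)

lemma finEntropy_comp_prod_self {α β : Type*} [Fintype α] [Fintype β]
    (V : Ω → α) (k : α → β) :
    finEntropy μ (fun ω => (k (V ω), V ω)) = finEntropy μ V := by
  unfold finEntropy
  rw [Fintype.sum_prod_type, Finset.sum_comm]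
  congr 1
  refine Finset.sum_congr rfl fun b _ => ?_
  rw [Finset.sum_eq_single_of_mem (k b) (Finset.mem_univ _)]
  · have hfiber : (fun ω => (k (V ω), V ω)) ⁻¹' {(k b, b)} = V ⁻¹' {b} := by
      ext ω
      simp only [Set.mem_preimage, Set.mem_singleton_iff, Prod.mk.injEq]
      exact ⟨And.right, fun h => ⟨h ▸ rfl, h⟩⟩
    rw [hfiber]
  · intro a _ ha
    have hfiber : (fun ω => (k (V ω), V ω)) ⁻¹' {(a, b)} = ∅ := by
      ext ω
      simp only [Set.mem_preimage, Set.mem_singleton_iff, Prod.mk.injEq,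
        Set.mem_empty_iff_false, iff_false, not_and]
      rintro h rfl
      exact ha h.symm
    simp [hfiber]

lemma finMutualInfo_comp_self {α β : Type*} [Fintype α] [Fintype β]
    (X : Ω → α) (f : α → β) :
    finMutualInfo μ (f ∘ X) X = finEntropy μ (f ∘ X) := by
  rw [finMutualInfo, Function.comp_def, finEntropy_comp_prod_self]
  ring

lemma finCondMutualInfo_eq_finCondEntropy_of_eq_comp {α β γ : Type*}
    [Fintype α] [Fintype β] [Fintype γ] (Z : Ω → α) (Y : Ω → β) (S : Ω → γ)
    (h : β × γ → α) (hZ : Z = fun ω => h (Y ω, S ω)) :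
    finCondMutualInfo μ Z Y S = finCondEntropy μ Z S := by
  have hjoint :
      finEntropy μ (fun ω => (Z ω, Y ω, S ω)) = finEntropy μ (fun ω => (Y ω, S ω)) := by
    subst hZ
    exact finEntropy_comp_prod_self μ (fun ω => (Y ω, S ω)) h
  rw [finCondMutualInfo, finCondEntropy, hjoint]
  ring

lemma finCondEntropy_eq_finEntropy_of_finMutualInfo_eq_zero {α β : Type*}
    [Fintype α] [Fintype β] {Z : Ω → α} {S : Ω → β} (h : finMutualInfo μ Z S = 0) :
    finCondEntropy μ Z S = finEntropy μ Z := by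
  rw [finMutualInfo] at h
  rw [finCondEntropy]
  linarith

end

theorem invariant_implies_minimal_up_to_residual_general {Ω : Type*} [MeasurableSpace Ω]
    (μ : Measure Ω)
    {𝒮 𝒴 𝒳 𝒵 : Type*}
    [Fintype 𝒮] [Fintype 𝒴] [Fintype 𝒳] [Fintype 𝒵]
    (S : Ω → 𝒮) (Y : Ω → 𝒴) (X : Ω → 𝒳) (Z : Ω → 𝒵)
    (g : 𝒮 × 𝒴 → 𝒳) (hXg : X = fun ω => g (S ω, Y ω))
    (f : 𝒳 → 𝒵) (hZf : Z = f ∘ X)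
    (ε : ℝ) (hε : ε = finCondMutualInfo μ Z Y S - finMutualInfo μ X Y)
    (hinv : finMutualInfo μ Z S = 0) :
    finMutualInfo μ Z X = finMutualInfo μ X Y + ε := by
  have hZYS : Z = fun ω => f (g (S ω, Y ω)) := by rw [hZf, hXg]; rfl
  have hcond : finCondMutualInfo μ Z Y S = finEntropy μ Z := by
    rw [finCondMutualInfo_eq_finCondEntropy_of_eq_comp μ Z Y S (fun p => f (g (p.2, p.1)))
      hZYS, finCondEntropy_eq_finEntropy_of_finMutualInfo_eq_zero μ hinv]
  rw [hε, hcond, add_sub_cancel, hZf, finMutualInfo_comp_self]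

theorem invariant_implies_minimal_up_to_residual {Ω : Type*} [MeasurableSpace Ω]
    (μ : Measure Ω) [IsProbabilityMeasure μ]
    {𝒮 𝒴 𝒳 𝒵 : Type*}
    [Fintype 𝒮] [Nonempty 𝒮] [MeasurableSpace 𝒮] [MeasurableSingletonClass 𝒮]
    [Fintype 𝒴] [Nonempty 𝒴] [MeasurableSpace 𝒴] [MeasurableSingletonClass 𝒴]
    [Fintype 𝒳] [Nonempty 𝒳] [MeasurableSpace 𝒳] [MeasurableSingletonClass 𝒳]
    [Fintype 𝒵] [Nonempty 𝒵] [MeasurableSpace 𝒵] [MeasurableSingletonClass 𝒵]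
    (S : Ω → 𝒮) (Y : Ω → 𝒴) (X : Ω → 𝒳) (Z : Ω → 𝒵)
    (hS : Measurable S) (hY : Measurable Y) (hX : Measurable X) (hZ : Measurable Z)
    (g : 𝒮 × 𝒴 → 𝒳) (hXg : X = fun ω => g (S ω, Y ω))
    (f : 𝒳 → 𝒵) (hZf : Z = f ∘ X)
    (ε : ℝ) (hε : ε = finCondMutualInfo μ Z Y S - finMutualInfo μ X Y)
    (hinv : finMutualInfo μ Z S = 0) :
    finMutualInfo μ Z X = finMutualInfo μ X Y + ε :=
  invariant_implies_minimal_up_to_residual_general μ S Y X Z g hXg f hZf ε hε hinv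
end
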